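/- Let Z be a partition and Z̄ := {ā : a ∈ Z}. Then for every s ∈ ℂ and every function u holomorphic on the interior of D, if L_s u = u on the interior of D, then L_{Z̄,s} u = u on the interior of D. -/

import Mathlib

open Complex MeasureTheory Metric Set
open scoped Real

noncomputable section


abbrev SL2R := Matrix.SpecialLinearGroup (Fin 2) ℝ

/-- Entries of a matrix in `SL(2,ℝ)`, as complex numbers. -/
def mA (g : SL2R) : ℂ := ((g.1 0 0 : ℝ) : ℂ)
def mB (g : SL2R) : ℂ := ((g.1 0 1 : ℝ) : ℂ)
def mC (g : SL2R) : ℂ := ((g.1 1 0 : ℝ) : ℂ)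
def mD (g : SL2R) : ℂ := ((g.1 1 1 : ℝ) : ℂ)

/-- The Möbius action of `SL(2,ℝ)` on the Riemann sphere `ℂ ∪ {∞}`. -/
def moebius (g : SL2R) : OnePoint ℂ → OnePoint ℂ := fun z =>
  match z with
  | OnePoint.infty => if mC g = 0 then OnePoint.infty else ((mA g / mC g : ℂ) : OnePoint ℂ)
  | (w : ℂ) => if mC g * w + mD g = 0 then OnePoint.infty
      else (((mA g * w + mB g) / (mC g * w + mD g) : ℂ) : OnePoint ℂ)

/-- The Möbius action on `ℂ`, with junk value at the pole. -/
def moebiusC (g : SL2R) (z : ℂ) : ℂ := (mA g * z + mB g) / (mC g * z + mD g)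

/-- The Möbius action on `ℝ`, with junk value at the pole. -/
def moebiusR (g : SL2R) (x : ℝ) : ℝ :=
  (g.1 0 0 * x + g.1 0 1) / (g.1 1 0 * x + g.1 1 1)

/-- The complex derivative `γ'(z) = (cz+d)⁻²` of a Möbius transformation (`det = 1`). -/
def dMob (g : SL2R) (z : ℂ) : ℂ := ((mC g * z + mD g)⁻¹) ^ 2

/-- The involution `a ↦ ā` on the alphabet `{1, …, 2r}` (as `Fin (2*r)`). -/
def bar {r : ℕ} (a : Fin (2 * r)) : Fin (2 * r) :=
  if h : (a : ℕ) < r then ⟨(a : ℕ) + r, by omega⟩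
  else ⟨(a : ℕ) - r, by have := a.isLt; omega⟩

/-- Schottky data: `2r` pairwise disjoint closed disks centered on the real axis and
`2r` elements of `SL(2,ℝ)` with `γ_a((ℂ∪{∞}) \ interior D_{ā}) = D_a`, `γ_ā = γ_a⁻¹`. -/
structure Schottky (r : ℕ) where
  hr : 1 ≤ r
  center : Fin (2 * r) → ℝ
  radius : Fin (2 * r) → ℝ
  radius_pos : ∀ a, 0 < radius a
  disj : Pairwise fun a b =>
    Disjoint (closedBall ((center a : ℝ) : ℂ) (radius a)) (closedBall ((center b : ℝ) : ℂ) (radius b))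
  γ : Fin (2 * r) → SL2R
  γ_bar : ∀ a, γ (bar a) = (γ a)⁻¹
  γ_maps : ∀ a, moebius (γ a) ''
      (univ \ ((fun z : ℂ => (z : OnePoint ℂ)) '' interior (closedBall ((center (bar a) : ℝ) : ℂ) (radius (bar a)))))
    = (fun z : ℂ => (z : OnePoint ℂ)) '' closedBall ((center a : ℝ) : ℂ) (radius a)

/-- Words: finite sequences of letters with `a_{j+1} ≠ ā_j`. -/
def IsWord {r : ℕ} (w : List (Fin (2 * r))) : Prop := w.Chain' fun x y => y ≠ bar x

/-- The word `ā := ā_n ⋯ ā_1`. -/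
def barWord {r : ℕ} (w : List (Fin (2 * r))) : List (Fin (2 * r)) := (w.map bar).reverse

namespace Schottky

variable {r : ℕ} (S : Schottky r)

/-- The disk `D_a` for a letter `a`. -/
def disk (a : Fin (2 * r)) : Set ℂ := closedBall ((S.center a : ℝ) : ℂ) (S.radius a)

/-- `γ_w := γ_{a_1} ⋯ γ_{a_n}`. -/
def g (w : List (Fin (2 * r))) : SL2R := (w.map S.γ).prod

/-- The disk `D_w := γ_{w'}(D_{a_n})` of a nonempty word, as a subset of the Riemann sphere. -/
def sdisk : List (Fin (2 * r)) → Set (OnePoint ℂ)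
  | [] => ∅
  | a :: w => moebius (S.g ((a :: w).dropLast)) ''
      ((fun z : ℂ => (z : OnePoint ℂ)) '' S.disk ((a :: w).getLast (List.cons_ne_nil a w)))

/-- The disk `D_w` as a subset of `ℂ`. -/
def wdisk (w : List (Fin (2 * r))) : Set ℂ := {z : ℂ | (z : OnePoint ℂ) ∈ S.sdisk w}

/-- The interval `I_w = D_w ∩ ℝ`, as a subset of `ℝ`. -/
def wint (w : List (Fin (2 * r))) : Set ℝ := {x : ℝ | ((x : ℝ) : ℂ) ∈ S.wdisk w}

/-- The length `|I_w|` of the interval `I_w`. -/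
def wlen (w : List (Fin (2 * r))) : ℝ := Metric.diam (S.wint w)

/-- `D = ⋃_{a ∈ A} D_a`. -/
def D : Set ℂ := ⋃ a, S.disk a

/-- `I = D ∩ ℝ`, as a subset of `ℝ`. -/
def Ire : Set ℝ := {x : ℝ | ((x : ℝ) : ℂ) ∈ S.D}

/-- `D₂ = ⋃_{|w| = 2} D_w`. -/
def D₂ : Set ℂ := ⋃ (a : Fin (2 * r)), ⋃ (b : Fin (2 * r)), ⋃ (_ : b ≠ bar a), S.wdisk [a, b]

/-- `I'_a` for a letter `a`: the convex hull of `⋃_{b ≠ ā} I_{ab}`. -/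
def iprimeLetter (a : Fin (2 * r)) : Set ℝ :=
  convexHull ℝ (⋃ (b : Fin (2 * r)), ⋃ (_ : b ≠ bar a), S.wint [a, b])

/-- `I'_w := γ_{w'}(I'_{a_n})` for a nonempty word `w`. -/
def iprime : List (Fin (2 * r)) → Set ℝ
  | [] => ∅
  | a :: w => moebiusR (S.g ((a :: w).dropLast)) ''
      S.iprimeLetter ((a :: w).getLast (List.cons_ne_nil a w))

/-- The partition `Z(τ)`. -/
def Ztau (τ : ℝ) : Set (List (Fin (2 * r))) :=
  {w | w ≠ [] ∧ IsWord w ∧ S.wlen w ≤ τ ∧ (w.dropLast = [] ∨ τ < S.wlen w.dropLast)}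

/-- The limit set `Λ_Γ ⊂ ℝ`. -/
def limitSet : Set ℝ :=
  {x : ℝ | ∀ n : ℕ, 1 ≤ n → ∃ w : List (Fin (2 * r)), IsWord w ∧ w.length = n ∧ x ∈ S.wint w}

/-- The τ-neighbourhood `Λ_Γ(τ) ⊂ ℝ` of the limit set. -/
def limitSetNbhd (τ : ℝ) : Set ℝ := {x : ℝ | ∃ y ∈ S.limitSet, |x - y| ≤ τ}

end Schottky

/-- `ℓ` is a holomorphic branch on `U` of the logarithm of the derivative of the Möbius
transformation of `g`, real on `U ∩ ℝ`. -/
structure IsLogBranch (g : SL2R) (U : Set ℂ) (ℓ : ℂ → ℂ) : Prop where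
  holo : DifferentiableOn ℂ ℓ U
  exp_eq : ∀ z ∈ U, Complex.exp (ℓ z) = dMob g z
  real_on : ∀ x : ℝ, ((x : ℝ) : ℂ) ∈ U → (ℓ ((x : ℝ) : ℂ)).im = 0

/-- A family of branches `ℓ a b` of `log γ_a'` on `D_b`, for all `a ≠ b̄`. -/
def IsBranchFamily {r : ℕ} (S : Schottky r) (ℓ : Fin (2 * r) → Fin (2 * r) → ℂ → ℂ) : Prop :=
  ∀ a b : Fin (2 * r), a ≠ bar b → IsLogBranch (S.γ a) (S.disk b) (ℓ a b)

/-- The fixed-point equation `L_s u = u` on the interior of `D`, written pointwise. -/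
def TransferFixed {r : ℕ} (S : Schottky r) (s : ℂ)
    (ℓ : Fin (2 * r) → Fin (2 * r) → ℂ → ℂ) (u : ℂ → ℂ) : Prop :=
  ∀ b : Fin (2 * r), ∀ z ∈ interior (S.disk b),
    u z = ∑ a : Fin (2 * r), if a ≠ bar b then
      Complex.exp (s * ℓ a b z) * u (moebiusC (S.γ a) z) else 0

/-- The transfer operator `L_s`, as an operator on functions. -/
def transferOp {r : ℕ} (S : Schottky r) (s : ℂ)
    (ℓ : Fin (2 * r) → Fin (2 * r) → ℂ → ℂ) (u : ℂ → ℂ) : ℂ → ℂ := fun z =>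
  ∑ b : Fin (2 * r), (S.disk b).indicator
    (fun w => ∑ a : Fin (2 * r), if a ≠ bar b then
      Complex.exp (s * ℓ a b w) * u (moebiusC (S.γ a) w) else 0) z

/-- A partition: a finite set of nonempty words such that every long enough word
has exactly one prefix in it. -/
def IsPartition {r : ℕ} (S : Schottky r) (Z : Finset (List (Fin (2 * r)))) : Prop :=
  (∀ w ∈ Z, w ≠ [] ∧ IsWord w) ∧
  ∃ N : ℕ, ∀ w : List (Fin (2 * r)), IsWord w → N ≤ w.length →
    ∃! p : List (Fin (2 * r)), p ∈ Z ∧ p <+: w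

/-!
Iterating `L_s u = u` writes `u(z)`, for `z ∈ D_b`, as the sum of the terms `γ_v'(z)^s u(γ_v z)`
over the words `v b`, each term being the sum of the terms of its one-letter extensions on the
left. Expanding only the words none of whose suffixes lies in `Z̄` stops after finitely many steps
because `Z` is a partition, and the terms left over are exactly those of `L_{Z̄,s} u(z)`. Their
powers agree with the prescribed ones because two branches of `log γ_v'` on a disk that are real
on the real axis coincide.
-/

def den (g : SL2R) (z : ℂ) : ℂ := mC g * z + mD g

lemma mA_mul (A B : SL2R) : mA (A * B) = mA A * mA B + mB A * mC B := by
  simp only [mA, mB, mC, Matrix.SpecialLinearGroup.coe_mul, Matrix.mul_apply, Fin.sum_univ_two]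
  push_cast; ring

lemma mB_mul (A B : SL2R) : mB (A * B) = mA A * mB B + mB A * mD B := by
  simp only [mA, mB, mD, Matrix.SpecialLinearGroup.coe_mul, Matrix.mul_apply, Fin.sum_univ_two]
  push_cast; ring

lemma mC_mul (A B : SL2R) : mC (A * B) = mC A * mA B + mD A * mC B := by
  simp only [mA, mC, mD, Matrix.SpecialLinearGroup.coe_mul, Matrix.mul_apply, Fin.sum_univ_two]
  push_cast; ring

lemma mD_mul (A B : SL2R) : mD (A * B) = mC A * mB B + mD A * mD B := by
  simp only [mB, mC, mD, Matrix.SpecialLinearGroup.coe_mul, Matrix.mul_apply, Fin.sum_univ_two]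
  push_cast; ring

lemma den_one (z : ℂ) : den 1 z = 1 := by simp [den, mC, mD]

lemma moebiusC_one (z : ℂ) : moebiusC 1 z = z := by simp [moebiusC, mA, mB, mC, mD]

lemma den_mul (A B : SL2R) {z : ℂ} (hB : den B z ≠ 0) :
    den (A * B) z = den A (moebiusC B z) * den B z := by
  simp only [den, moebiusC] at hB ⊢
  rw [add_mul, mul_assoc, div_mul_cancel₀ _ hB, mC_mul, mD_mul]
  ring

lemma moebiusC_mul (A B : SL2R) {z : ℂ} (hB : den B z ≠ 0) :
    moebiusC (A * B) z = moebiusC A (moebiusC B z) := by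
  have hnum : mA (A * B) * z + mB (A * B) = (mA A * moebiusC B z + mB A) * den B z := by
    simp only [den, moebiusC] at hB ⊢
    rw [add_mul, mul_assoc, div_mul_cancel₀ _ hB, mA_mul, mB_mul]
    ring
  rw [moebiusC, hnum, ← den, den_mul A B hB, mul_div_mul_right _ _ hB, moebiusC]
  rfl

lemma dMob_mul (A B : SL2R) {z : ℂ} (hB : den B z ≠ 0) :
    dMob (A * B) z = dMob A (moebiusC B z) * dMob B z := by
  change (den (A * B) z)⁻¹ ^ 2 = (den A (moebiusC B z))⁻¹ ^ 2 * (den B z)⁻¹ ^ 2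
  rw [den_mul A B hB, mul_inv, mul_pow]

lemma den_inv_moebiusC_ne_zero (g : SL2R) {z : ℂ} (hz : den g z ≠ 0) :
    den g⁻¹ (moebiusC g z) ≠ 0 := by
  have h := den_mul g⁻¹ g hz
  rw [inv_mul_cancel, den_one] at h
  exact left_ne_zero_of_mul_eq_one h.symm

lemma moebiusC_inv_moebiusC (g : SL2R) {z : ℂ} (hz : den g z ≠ 0) :
    moebiusC g⁻¹ (moebiusC g z) = z := by
  rw [← moebiusC_mul _ _ hz, inv_mul_cancel, moebiusC_one]

lemma moebiusC_ofReal (g : SL2R) (x : ℝ) : moebiusC g x = (moebiusR g x : ℂ) := by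
  simp only [moebiusC, moebiusR, mA, mB, mC, mD]
  push_cast
  rfl

lemma continuous_den (g : SL2R) : Continuous (den g) := by
  unfold den; fun_prop

lemma differentiableOn_moebiusC (g : SL2R) {U : Set ℂ} (hU : ∀ z ∈ U, den g z ≠ 0) :
    DifferentiableOn ℂ (moebiusC g) U := by
  unfold moebiusC
  exact DifferentiableOn.div (by fun_prop) (by fun_prop) hU

lemma moebius_coe (g : SL2R) (z : ℂ) :
    moebius g z = if den g z = 0 then OnePoint.infty else (moebiusC g z : OnePoint ℂ) :=
  rfl

lemma bar_involutive {r : ℕ} : Function.Involutive (bar : Fin (2 * r) → Fin (2 * r)) := by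
  intro a
  unfold bar
  split_ifs with ha hba hba <;> ext <;> simp at hba ⊢ <;> omega

lemma bar_ne_self {r : ℕ} (a : Fin (2 * r)) : bar a ≠ a := by
  unfold bar
  split_ifs <;> simp [Fin.ext_iff] <;> omega

lemma ne_bar_comm {r : ℕ} {a b : Fin (2 * r)} : a ≠ bar b ↔ b ≠ bar a := by
  rw [not_iff_not, eq_comm, bar_involutive.eq_iff]

lemma barWord_barWord {r : ℕ} (w : List (Fin (2 * r))) : barWord (barWord w) = w := by
  simp [barWord, Function.comp_def, bar_involutive _]

lemma barWord_cons {r : ℕ} (a : Fin (2 * r)) (w : List (Fin (2 * r))) :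
    barWord (a :: w) = barWord w ++ [bar a] := by
  simp [barWord]

lemma getLast?_barWord {r : ℕ} (w : List (Fin (2 * r))) :
    (barWord w).getLast? = w.head?.map bar := by
  simp [barWord, List.getLast?_reverse, List.head?_map]

lemma getLast?_barWord_eq_some {r : ℕ} {w : List (Fin (2 * r))} {b : Fin (2 * r)} :
    (barWord w).getLast? = some b ↔ [bar b] <+: w := by
  rw [getLast?_barWord, List.singleton_prefix_iff_head?_eq_some]
  cases w.head? <;> simp [bar_involutive.eq_iff]

lemma isWord_iff_isChain {r : ℕ} {w : List (Fin (2 * r))} :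
    IsWord w ↔ w.IsChain fun x y ↦ y ≠ bar x :=
  Iff.rfl

lemma isWord_barWord {r : ℕ} {w : List (Fin (2 * r))} : IsWord (barWord w) ↔ IsWord w := by
  simp only [isWord_iff_isChain, barWord, List.isChain_reverse, List.isChain_map,
    bar_involutive _]
  simp only [ne_comm (a := bar _)]

lemma isWord_cons_append {r : ℕ} {a b : Fin (2 * r)} {v : List (Fin (2 * r))} :
    IsWord (a :: (v ++ [b])) ↔ a ≠ bar (v.headD b) ∧ IsWord (v ++ [b]) := by
  cases v <;> simp [isWord_iff_isChain, List.isChain_cons_cons, ne_bar_comm (a := a)]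

lemma IsWord.of_prefix {r : ℕ} {w w' : List (Fin (2 * r))} (hw' : IsWord w') (h : w <+: w') :
    IsWord w :=
  isWord_iff_isChain.2 ((isWord_iff_isChain.1 hw').prefix h)

lemma IsWord.append_replicate_getLast {r : ℕ} {w : List (Fin (2 * r))} (hw : IsWord w)
    (hne : w ≠ []) (n : ℕ) : IsWord (w ++ List.replicate n (w.getLast hne)) := by
  rw [isWord_iff_isChain, List.isChain_append]
  refine ⟨hw, List.isChain_replicate_of_rel n (bar_ne_self _).symm, ?_⟩
  intro x hx y hy
  rw [List.getLast?_eq_some_getLast hne, Option.mem_some_iff] at hx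
  obtain ⟨-, rfl⟩ := List.eq_of_mem_replicate (List.mem_of_mem_head? hy)
  rw [← hx]
  exact (bar_ne_self _).symm

theorem sum_ite_append_singleton_prefix {α M : Type*} [Fintype α] [DecidableEq α]
    [AddCommMonoid M] (Z : Finset (List α)) (l : List α) (f : List α → M) :
    ∑ x, ∑ p ∈ Z, (if l ++ [x] <+: p then f p else 0) =
      ∑ p ∈ Z, if l <+: p ∧ l ≠ p then f p else 0 := by
  rw [Finset.sum_comm]
  refine Finset.sum_congr rfl fun p _ ↦ ?_
  by_cases h : l <+: p ∧ l ≠ p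
  · obtain ⟨⟨t, rfl⟩, hne⟩ := h
    obtain ⟨y, t, rfl⟩ := List.exists_cons_of_ne_nil (by simpa using hne)
    simp [hne]
  · rw [if_neg h]
    refine Finset.sum_eq_zero fun x _ ↦ if_neg fun hx ↦ h ⟨(List.prefix_append _ _).trans hx, ?_⟩
    rintro rfl
    simpa using hx.length_le

lemma sum_ite_append_bar_prefix {r : ℕ} {M : Type*} [AddCommMonoid M]
    (Z : Finset (List (Fin (2 * r)))) {W : List (Fin (2 * r))} (hWZ : W ∉ Z)
    (f : List (Fin (2 * r)) → M) :
    ∑ a, ∑ p ∈ Z, (if W ++ [bar a] <+: p then f p else 0) =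
      ∑ p ∈ Z, if W <+: p then f p else 0 := by
  calc _ = ∑ x, ∑ p ∈ Z, (if W ++ [x] <+: p then f p else 0) :=
        Equiv.sum_comp (bar_involutive.toPerm bar) fun x ↦
          ∑ p ∈ Z, if W ++ [x] <+: p then f p else 0
    _ = _ := by
      rw [sum_ite_append_singleton_prefix]
      exact Finset.sum_congr rfl fun p hp ↦
        if_congr (and_iff_left_of_imp fun _ h ↦ hWZ (h ▸ hp)) rfl rfl

lemma IsPartition.eq_of_prefix {r : ℕ} {S : Schottky r} {Z : Finset (List (Fin (2 * r)))}
    (hZ : IsPartition S Z) {p q : List (Fin (2 * r))} (hp : p ∈ Z) (hq : q ∈ Z) (hpq : p <+: q) :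
    p = q := by
  obtain ⟨hZw, N, hN⟩ := hZ
  obtain ⟨hqne, hqw⟩ := hZw q hq
  obtain ⟨_, -, huniq⟩ := hN _ (hqw.append_replicate_getLast hqne N) (by simp)
  exact (huniq p ⟨hp, hpq.trans (List.prefix_append _ _)⟩).trans
    (huniq q ⟨hq, List.prefix_append _ _⟩).symm

lemma IsLogBranch.eqOn {g : SL2R} {U : Set ℂ} {ℓ₁ ℓ₂ : ℂ → ℂ} (h₁ : IsLogBranch g U ℓ₁)
    (h₂ : IsLogBranch g U ℓ₂) (hU : IsPreconnected U) {x : ℝ} (hx : (x : ℂ) ∈ U) :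
    EqOn ℓ₁ ℓ₂ U := by
  refine Complex.isCoveringMap_exp.eqOn_of_comp_eqOn hU h₁.holo.continuousOn
    h₂.holo.continuousOn (fun z hz ↦ Subtype.ext ?_) hx ?_
  · simp [h₁.exp_eq z hz, h₂.exp_eq z hz]
  · have hreal (ℓ : ℂ → ℂ) (h : IsLogBranch g U ℓ) : ((ℓ x).re : ℂ) = ℓ x :=
      Complex.ext rfl (by simp [h.real_on x hx])
    rw [← hreal ℓ₁ h₁, ← hreal ℓ₂ h₂, Complex.ofReal_inj]
    apply Real.exp_injective
    rw [← Complex.ofReal_inj, Complex.ofReal_exp, Complex.ofReal_exp, hreal ℓ₁ h₁, hreal ℓ₂ h₂,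
      h₁.exp_eq x hx, h₂.exp_eq x hx]

namespace Schottky

variable {r : ℕ} (S : Schottky r)

lemma g_nil : S.g [] = 1 := rfl

lemma g_cons (a : Fin (2 * r)) (v : List (Fin (2 * r))) : S.g (a :: v) = S.γ a * S.g v := by
  simp [g]

lemma moebius_γ_mem_disk {a b : Fin (2 * r)} (hab : a ≠ bar b) {z : ℂ} (hz : z ∈ S.disk b) :
    moebius (S.γ a) z ∈ ((↑) : ℂ → OnePoint ℂ) '' S.disk a := by
  rw [disk, ← S.γ_maps a]
  refine mem_image_of_mem _ ⟨trivial, ?_⟩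
  rintro ⟨w, hw, hwz⟩
  rw [OnePoint.coe_eq_coe] at hwz
  subst hwz
  exact Set.disjoint_left.1 (S.disj (ne_bar_comm.1 hab)) hz (interior_subset hw)

lemma den_γ_ne_zero {a b : Fin (2 * r)} (hab : a ≠ bar b) {z : ℂ} (hz : z ∈ S.disk b) :
    den (S.γ a) z ≠ 0 := by
  obtain ⟨w, -, hw⟩ := S.moebius_γ_mem_disk hab hz
  intro h
  rw [moebius_coe, if_pos h] at hw
  exact OnePoint.coe_ne_infty w hw

lemma moebiusC_γ_mem_disk {a b : Fin (2 * r)} (hab : a ≠ bar b) {z : ℂ} (hz : z ∈ S.disk b) :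
    moebiusC (S.γ a) z ∈ S.disk a := by
  obtain ⟨w, hw, hwz⟩ := S.moebius_γ_mem_disk hab hz
  rw [moebius_coe, if_neg (S.den_γ_ne_zero hab hz), OnePoint.coe_eq_coe] at hwz
  exact hwz ▸ hw

lemma moebiusC_γ_mem_interior_disk {a b : Fin (2 * r)} (hab : a ≠ bar b) {z : ℂ}
    (hz : z ∈ interior (S.disk b)) : moebiusC (S.γ a) z ∈ interior (S.disk a) := by
  set g := S.γ a
  have hden := S.den_γ_ne_zero hab (interior_subset hz)
  refine mem_interior.2 ⟨{y | den g⁻¹ y ≠ 0} ∩ moebiusC g⁻¹ ⁻¹' interior (S.disk b), ?_, ?_,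
    den_inv_moebiusC_ne_zero g hden, by rwa [mem_preimage, moebiusC_inv_moebiusC g hden]⟩
  · rintro y ⟨hy, hy'⟩
    have hy_eq := moebiusC_inv_moebiusC g⁻¹ hy
    rw [inv_inv] at hy_eq
    rw [← hy_eq]
    exact S.moebiusC_γ_mem_disk hab (interior_subset hy')
  · exact (differentiableOn_moebiusC g⁻¹ fun _ h ↦ h).continuousOn.isOpen_inter_preimage
      (isOpen_compl_singleton.preimage (continuous_den _)) isOpen_interior

lemma den_g_ne_zero_and_moebiusC_g_mem_disk {b : Fin (2 * r)} {v : List (Fin (2 * r))}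
    (hv : IsWord (v ++ [b])) {z : ℂ} (hz : z ∈ S.disk b) :
    den (S.g v) z ≠ 0 ∧ moebiusC (S.g v) z ∈ S.disk (v.headD b) := by
  induction v with
  | nil => simpa [g_nil, den_one, moebiusC_one] using hz
  | cons a v ih =>
    obtain ⟨hav, hv⟩ := isWord_cons_append.1 hv
    obtain ⟨hden, hmem⟩ := ih hv
    rw [g_cons, den_mul _ _ hden, moebiusC_mul _ _ hden]
    exact ⟨mul_ne_zero (S.den_γ_ne_zero hav hmem) hden, S.moebiusC_γ_mem_disk hav hmem⟩

lemma den_g_ne_zero {b : Fin (2 * r)} {v : List (Fin (2 * r))} (hv : IsWord (v ++ [b])) {z : ℂ}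
    (hz : z ∈ S.disk b) : den (S.g v) z ≠ 0 :=
  (S.den_g_ne_zero_and_moebiusC_g_mem_disk hv hz).1

lemma moebiusC_g_mem_disk {b : Fin (2 * r)} {v : List (Fin (2 * r))} (hv : IsWord (v ++ [b]))
    {z : ℂ} (hz : z ∈ S.disk b) : moebiusC (S.g v) z ∈ S.disk (v.headD b) :=
  (S.den_g_ne_zero_and_moebiusC_g_mem_disk hv hz).2

lemma moebiusC_g_mem_interior_disk {b : Fin (2 * r)} {v : List (Fin (2 * r))}
    (hv : IsWord (v ++ [b])) {z : ℂ} (hz : z ∈ interior (S.disk b)) :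
    moebiusC (S.g v) z ∈ interior (S.disk (v.headD b)) := by
  induction v with
  | nil => simpa [g_nil, moebiusC_one] using hz
  | cons a v ih =>
    obtain ⟨hav, hv⟩ := isWord_cons_append.1 hv
    rw [g_cons, moebiusC_mul _ _ (S.den_g_ne_zero hv (interior_subset hz))]
    exact S.moebiusC_γ_mem_interior_disk hav (ih hv)

/-- When `v ++ [b]` is a word, the branch of `log γ_v'` on `D_b` obtained from the branches `ℓ`
by the chain rule. -/
def wordLog (ℓ : Fin (2 * r) → Fin (2 * r) → ℂ → ℂ) (b : Fin (2 * r)) :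
    List (Fin (2 * r)) → ℂ → ℂ
  | [], _ => 0
  | a :: v, z => wordLog ℓ b v z + ℓ a (v.headD b) (moebiusC (S.g v) z)

lemma isLogBranch_wordLog {ℓ : Fin (2 * r) → Fin (2 * r) → ℂ → ℂ} (hℓ : IsBranchFamily S ℓ)
    {b : Fin (2 * r)} {v : List (Fin (2 * r))} (hv : IsWord (v ++ [b])) :
    IsLogBranch (S.g v) (S.disk b) (S.wordLog ℓ b v) := by
  induction v with
  | nil => exact ⟨differentiableOn_const 0, fun z _ ↦ by simp [wordLog, g_nil, dMob, mC, mD],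
      fun x _ ↦ by simp [wordLog]⟩
  | cons a v ih =>
    obtain ⟨hav, hv⟩ := isWord_cons_append.1 hv
    have hℓa := hℓ a _ hav
    refine ⟨?_, fun z hz ↦ ?_, fun x hx ↦ ?_⟩
    · show DifferentiableOn ℂ (S.wordLog ℓ b v + ℓ a (v.headD b) ∘ moebiusC (S.g v)) _
      exact (ih hv).holo.add (hℓa.holo.comp (differentiableOn_moebiusC _ fun z hz ↦
        S.den_g_ne_zero hv hz) fun z hz ↦ S.moebiusC_g_mem_disk hv hz)
    · rw [wordLog, exp_add, (ih hv).exp_eq z hz, hℓa.exp_eq _ (S.moebiusC_g_mem_disk hv hz),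
        g_cons, dMob_mul _ _ (S.den_g_ne_zero hv hz), mul_comm]
    · have hx' := S.moebiusC_g_mem_disk hv hx
      rw [moebiusC_ofReal] at hx'
      rw [wordLog, add_im, (ih hv).real_on x hx, moebiusC_ofReal, hℓa.real_on _ hx', add_zero]

/-- `γ_v'(z)^s u(γ_v z)`, with the power taken along `wordLog`. -/
def orbitTerm (s : ℂ) (ℓ : Fin (2 * r) → Fin (2 * r) → ℂ → ℂ) (u : ℂ → ℂ) (b : Fin (2 * r))
    (v : List (Fin (2 * r))) (z : ℂ) : ℂ :=
  Complex.exp (s * S.wordLog ℓ b v z) * u (moebiusC (S.g v) z)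

lemma orbitTerm_nil (s : ℂ) (ℓ : Fin (2 * r) → Fin (2 * r) → ℂ → ℂ) (u : ℂ → ℂ)
    (b : Fin (2 * r)) (z : ℂ) : S.orbitTerm s ℓ u b [] z = u z := by
  simp [orbitTerm, wordLog, g_nil, moebiusC_one]

lemma orbitTerm_eq_sum_cons {s : ℂ} {ℓ : Fin (2 * r) → Fin (2 * r) → ℂ → ℂ} {u : ℂ → ℂ}
    (hfix : TransferFixed S s ℓ u) {b : Fin (2 * r)} {v : List (Fin (2 * r))}
    (hv : IsWord (v ++ [b])) {z : ℂ} (hz : z ∈ interior (S.disk b)) :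
    S.orbitTerm s ℓ u b v z =
      ∑ a, if a ≠ bar (v.headD b) then S.orbitTerm s ℓ u b (a :: v) z else 0 := by
  have hden := S.den_g_ne_zero hv (interior_subset hz)
  rw [orbitTerm, hfix _ _ (S.moebiusC_g_mem_interior_disk hv hz), Finset.mul_sum]
  refine Finset.sum_congr rfl fun a _ ↦ ?_
  split_ifs
  · rw [orbitTerm, wordLog, g_cons, moebiusC_mul _ _ hden, mul_add, exp_add]
    ring
  · rw [mul_zero]

/-- The term of `L_{Z̄,s}` indexed by `w ∈ Z`, with the branch `ℓ' w` of `log γ_{w̄'}'`. -/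
def refinedTerm (s : ℂ) (ℓ' : List (Fin (2 * r)) → ℂ → ℂ) (u : ℂ → ℂ)
    (w : List (Fin (2 * r))) (z : ℂ) : ℂ :=
  Complex.exp (s * ℓ' w z) * u (moebiusC (S.g (barWord w).dropLast) z)

section Partition

variable {S} {Z : Finset (List (Fin (2 * r)))} {s : ℂ} {ℓ : Fin (2 * r) → Fin (2 * r) → ℂ → ℂ}
  {ℓ' : List (Fin (2 * r)) → ℂ → ℂ} {u : ℂ → ℂ}

lemma refinedTerm_eq_orbitTerm (hℓ : IsBranchFamily S ℓ)
    (hℓ' : ∀ w ∈ Z, ∀ b : Fin (2 * r), (barWord w).getLast? = some b →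
      IsLogBranch (S.g ((barWord w).dropLast)) (S.disk b) (ℓ' w))
    {b : Fin (2 * r)} {v : List (Fin (2 * r))} (hv : IsWord (v ++ [b]))
    (hvZ : barWord (v ++ [b]) ∈ Z) {z : ℂ} (hz : z ∈ S.disk b) :
    S.refinedTerm s ℓ' u (barWord (v ++ [b])) z = S.orbitTerm s ℓ u b v z := by
  have hbranch := hℓ' _ hvZ b (by rw [barWord_barWord, List.getLast?_concat])
  rw [barWord_barWord, List.dropLast_concat] at hbranch
  have hcenter : ((S.center b : ℝ) : ℂ) ∈ S.disk b := mem_closedBall_self (S.radius_pos b).le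
  rw [refinedTerm, orbitTerm, barWord_barWord, List.dropLast_concat,
    hbranch.eqOn (S.isLogBranch_wordLog hℓ hv) (convex_closedBall _ _).isPreconnected hcenter hz]

theorem orbitTerm_eq_sum_refinedTerm (hZ : IsPartition S Z) {N : ℕ}
    (hN : ∀ w, IsWord w → N ≤ w.length → ∃! p, p ∈ Z ∧ p <+: w) (hℓ : IsBranchFamily S ℓ)
    (hℓ' : ∀ w ∈ Z, ∀ b : Fin (2 * r), (barWord w).getLast? = some b →
      IsLogBranch (S.g ((barWord w).dropLast)) (S.disk b) (ℓ' w))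
    (hfix : TransferFixed S s ℓ u) (b : Fin (2 * r)) (v : List (Fin (2 * r)))
    (hv : IsWord (v ++ [b]))
    (hvZ : ∀ p ∈ Z, p <+: barWord (v ++ [b]) → p = barWord (v ++ [b]))
    {z : ℂ} (hz : z ∈ interior (S.disk b)) :
    S.orbitTerm s ℓ u b v z =
      ∑ p ∈ Z, if barWord (v ++ [b]) <+: p then S.refinedTerm s ℓ' u p z else 0 := by
  set W := barWord (v ++ [b]) with hW
  by_cases hWZ : W ∈ Z
  · rw [Finset.sum_eq_single_of_mem W hWZ fun p hp hne ↦
      if_neg fun h ↦ hne (hZ.eq_of_prefix hWZ hp h).symm, if_pos (List.prefix_refl W)]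
    exact (refinedTerm_eq_orbitTerm hℓ hℓ' hv hWZ (interior_subset hz)).symm
  -- makes the measure `N - v.length` decrease in the recursive call
  have hlen : v.length + 1 < N := by
    by_contra! h
    obtain ⟨p, ⟨hp, hpW⟩, -⟩ := hN W (isWord_barWord.2 hv) (by simpa [hW, barWord] using h)
    exact hWZ (hvZ p hp hpW ▸ hp)
  have hcons (a : Fin (2 * r)) : barWord (a :: v ++ [b]) = W ++ [bar a] := barWord_cons _ _
  have hterm (a : Fin (2 * r)) :
      (if a ≠ bar (v.headD b) then S.orbitTerm s ℓ u b (a :: v) z else 0) =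
        ∑ p ∈ Z, if W ++ [bar a] <+: p then S.refinedTerm s ℓ' u p z else 0 := by
    split_ifs with ha
    · have hav : IsWord (a :: v ++ [b]) := isWord_cons_append.2 ⟨ha, hv⟩
      rw [orbitTerm_eq_sum_refinedTerm hZ hN hℓ hℓ' hfix b (a :: v) hav ?_ hz, hcons]
      intro p hp hpa
      rw [hcons] at hpa ⊢
      rcases List.prefix_concat_iff.1 hpa with h | h
      · exact h
      · exact absurd (hvZ p hp h ▸ hp) hWZ
    · refine (Finset.sum_eq_zero fun p hp ↦ if_neg fun hpa ↦ ha ?_).symm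
      have hword := (hZ.1 p hp).2.of_prefix hpa
      rw [← hcons, isWord_barWord] at hword
      exact (isWord_cons_append.1 hword).1
  rw [S.orbitTerm_eq_sum_cons hfix hv hz, Finset.sum_congr rfl fun a _ ↦ hterm a,
    sum_ite_append_bar_prefix Z hWZ]
termination_by N - v.length

end Partition

end Schottky

theorem stmt4_general {r : ℕ} (S : Schottky r) (Z : Finset (List (Fin (2 * r))))
    (hZ : IsPartition S Z) (s : ℂ)
    (ℓ : Fin (2 * r) → Fin (2 * r) → ℂ → ℂ) (hℓ : IsBranchFamily S ℓ)
    (ℓ' : List (Fin (2 * r)) → ℂ → ℂ)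
    (hℓ' : ∀ w ∈ Z, ∀ b : Fin (2 * r), (barWord w).getLast? = some b →
      IsLogBranch (S.g ((barWord w).dropLast)) (S.disk b) (ℓ' w))
    (u : ℂ → ℂ)
    (hfix : TransferFixed S s ℓ u) :
    ∀ b : Fin (2 * r), ∀ z ∈ interior (S.disk b),
      u z = ∑ w ∈ Z, if (barWord w).getLast? = some b then
        Complex.exp (s * ℓ' w z) * u (moebiusC (S.g ((barWord w).dropLast)) z) else 0 := by
  intro b z hz
  obtain ⟨N, hN⟩ := hZ.2
  have hb : ∀ p ∈ Z, p <+: [bar b] → p = [bar b] := by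
    intro p hp hpb
    rcases List.prefix_cons_iff.1 hpb with h | ⟨t, rfl, ht⟩
    · exact absurd h (hZ.1 p hp).1
    · rw [List.prefix_nil.1 ht]
  calc u z = S.orbitTerm s ℓ u b [] z := (S.orbitTerm_nil s ℓ u b z).symm
    _ = ∑ w ∈ Z, if [bar b] <+: w then S.refinedTerm s ℓ' u w z else 0 :=
      Schottky.orbitTerm_eq_sum_refinedTerm hZ hN hℓ hℓ' hfix b [] (by simp [isWord_iff_isChain])
        hb hz
    _ = _ := Finset.sum_congr rfl fun w _ ↦ if_congr getLast?_barWord_eq_some.symm rfl rfl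

/-- If `Z` is a partition and `L_s u = u` on the interior of `D`, then
`L_{Z̄,s} u = u` on the interior of `D`, where `Z̄ = {ā : a ∈ Z}`. -/
theorem stmt4 {r : ℕ} (S : Schottky r) (Z : Finset (List (Fin (2 * r))))
    (hZ : IsPartition S Z) (s : ℂ)
    (ℓ : Fin (2 * r) → Fin (2 * r) → ℂ → ℂ) (hℓ : IsBranchFamily S ℓ)
    (ℓ' : List (Fin (2 * r)) → ℂ → ℂ)
    (hℓ' : ∀ w ∈ Z, ∀ b : Fin (2 * r), (barWord w).getLast? = some b →
      IsLogBranch (S.g ((barWord w).dropLast)) (S.disk b) (ℓ' w))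
    (u : ℂ → ℂ) (hu : DifferentiableOn ℂ u (interior S.D))
    (hfix : TransferFixed S s ℓ u) :
    ∀ b : Fin (2 * r), ∀ z ∈ interior (S.disk b),
      u z = ∑ w ∈ Z, if (barWord w).getLast? = some b then
        Complex.exp (s * ℓ' w z) * u (moebiusC (S.g ((barWord w).dropLast)) z) else 0 :=
  stmt4_general S Z hZ s ℓ hℓ ℓ' hℓ' u hfix
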